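/- arXiv:2003.02238 — 2 statements merged into one kernel-verified Lean document; each statement's English description precedes it below -/
import Mathlib

section
/- If G is a countable group which has an infinite weakly amenable subgroup, then for every reasonable pointclass Γ, (Γ, E_G)-determinacy implies Γ-determinacy. -/
open Filter Set

/-- The position (list of moves) consisting of the first `n` moves of the run `x`. -/
def initSeg {S : Type*} (x : ℕ → S) (n : ℕ) : List S := List.ofFn (fun i : Fin n => x i)

/-- The run `x` is compatible with player I using strategy `σ`. -/
def FollowsStratI {S : Type*} (σ : List S → S) (x : ℕ → S) : Prop :=
  ∀ n, x (2 * n) = σ (initSeg x (2 * n))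

/-- The run `x` is compatible with player II using strategy `τ`. -/
def FollowsStratII {S : Type*} (τ : List S → S) (x : ℕ → S) : Prop :=
  ∀ n, x (2 * n + 1) = τ (initSeg x (2 * n + 1))

/-- The game with payoff set `A` (for player I) is determined. -/
def GameDetermined {S : Type*} (A : Set (ℕ → S)) : Prop :=
  (∃ σ : List S → S, ∀ x, FollowsStratI σ x → x ∈ A) ∨
  (∃ τ : List S → S, ∀ x, FollowsStratII τ x → x ∉ A)

/-- A pointclass: a collection of subsets of topological (in particular Polish) spaces closed
under continuous preimages. -/
structure Pointclass : Type 1 where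
  mem : ∀ (X : Type) [TopologicalSpace X], Set (Set X)
  continuous_preimage : ∀ (X Y : Type) [TopologicalSpace X] [TopologicalSpace Y]
    (f : X → Y), Continuous f → ∀ A : Set Y, A ∈ mem Y → f ⁻¹' A ∈ mem X

/-- `sigmaLevel X n` is the pointclass `Σ⁰_{n+1}` of subsets of `X`. -/
def sigmaLevel (X : Type) [TopologicalSpace X] : ℕ → Set (Set X)
  | 0 => {s | IsOpen s}
  | (n + 1) => {s | ∃ f : ℕ → Set X, (∀ k, (f k)ᶜ ∈ sigmaLevel X n) ∧ s = ⋃ k, f k}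

/-- `Δ⁰₆` sets: both `Σ⁰₆` and `Π⁰₆`. -/
def IsDelta06 {X : Type} [TopologicalSpace X] (s : Set X) : Prop :=
  s ∈ sigmaLevel X 5 ∧ sᶜ ∈ sigmaLevel X 5

/-- A function is `Δ⁰₆`-measurable if preimages of open sets are `Δ⁰₆`. -/
def Delta06Measurable {X Y : Type} [TopologicalSpace X] [TopologicalSpace Y] (f : X → Y) : Prop :=
  ∀ U : Set Y, IsOpen U → IsDelta06 (f ⁻¹' U)

/-- A reasonable pointclass: closed under unions and intersections with `Δ⁰₆` sets and under
substitution by `Δ⁰₆`-measurable functions. -/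
structure Reasonable (Γ : Pointclass) : Prop where
  union_delta : ∀ (X : Type) [TopologicalSpace X] (A B : Set X),
    A ∈ Γ.mem X → IsDelta06 B → A ∪ B ∈ Γ.mem X
  inter_delta : ∀ (X : Type) [TopologicalSpace X] (A B : Set X),
    A ∈ Γ.mem X → IsDelta06 B → A ∩ B ∈ Γ.mem X
  delta_subst : ∀ (X Y : Type) [TopologicalSpace X] [TopologicalSpace Y] (f : X → Y),
    Delta06Measurable f → ∀ A : Set Y, A ∈ Γ.mem Y → f ⁻¹' A ∈ Γ.mem X

/-- `Γ`-determinacy for games with moves in `S`: every `Γ` subset of `S^ω` is determined. -/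
def GammaDetOn (Γ : Pointclass) (S : Type) [TopologicalSpace S] : Prop :=
  ∀ A : Set (ℕ → S), A ∈ Γ.mem (ℕ → S) → GameDetermined A

/-- The orbit equivalence relation of the left shift action of `G` on `S^G`:
`y = g · x` where `(g · x)(h) = x (g⁻¹ h)`. -/
def ShiftRel (G : Type*) {S : Type*} [Group G] (x y : G → S) : Prop :=
  ∃ g : G, ∀ h : G, y h = x (g⁻¹ * h)

/-- `(Γ, E_G)`-determinacy for the shift action of `G` on `S^G`: every `E_G`-invariant `Γ`
subset of `S^G` has determined preimage under the homeomorphism `S^ω ≃ S^G` induced by any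
enumeration `π` of `G`. -/
def GammaShiftDet (Γ : Pointclass) (G : Type) [Group G] (S : Type) [TopologicalSpace S] : Prop :=
  ∀ A : Set (G → S), A ∈ Γ.mem (G → S) →
    (∀ x y : G → S, ShiftRel G x y → (x ∈ A ↔ y ∈ A)) →
    ∀ π : ℕ ≃ G, GameDetermined {x : ℕ → S | (fun g => x (π.symm g)) ∈ A}

/-- Condition (2) of appropriateness: for each `g`, each class `C` meets at most `b` classes
after translation by `g`. -/
def classBound {G : Type*} [Group G] (r : Setoid G) (g : G) (b : ℕ) : Prop :=
  ∀ C : Quotient r,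
    {C' : Quotient r | ∃ h : G, Quotient.mk r h = C ∧ Quotient.mk r (g * h) = C'}.encard ≤ (b : ℕ∞)

/-- An appropriate equivalence relation on a group `G`. -/
def AppropriateRel {G : Type*} [Group G] (r : Setoid G) : Prop :=
  Infinite (Quotient r) ∧ ∀ g : G, ∃ b : ℕ, classBound r g b

/-- The increasing sequence `A n` of finite sets of `∼`-classes witnesses the Følner-type
condition in the definition of weak amenability. -/
def WAWitness {G : Type*} [Group G] (r : Setoid G) (A : ℕ → Finset (Quotient r)) : Prop :=
  Monotone A ∧ (∀ C : Quotient r, ∃ n, C ∈ A n) ∧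
    ∀ g : G, Filter.Tendsto (fun n =>
      (({C : Quotient r | C ∈ A n ∧
          ∀ h : G, Quotient.mk r h = C → Quotient.mk r (g * h) ∈ A n}.ncard : ℝ)) /
        ((A n).card : ℝ)) Filter.atTop (nhds 1)

/-- A group is weakly amenable if it is finite or carries an appropriate equivalence relation
together with a witnessing increasing sequence of finite sets of classes. -/
def WeaklyAmenable (G : Type*) [Group G] : Prop :=
  Finite G ∨ ∃ (r : Setoid G) (A : ℕ → Finset (Quotient r)), AppropriateRel r ∧ WAWitness r A

/-!
Fix `a ≠ b` in `S` and an enumeration `π` of `G` such that every nontrivial left translate of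
`π (6ℕ)` meets both `π (6ℕ + 2)` and `π (6ℕ + 3)`; such a `π` is built greedily. Call `p` an
anchor of `y : S^G` if `y ≡ a` on `p π (6ℕ)` and `y ≡ b` on `p π (6ℕ + 2)`. Given `B ⊆ S^ω`, let
`A` be the set of `y` with exactly one anchor `p` whose data `k ↦ y (p π (6k + 4 + k % 2))` lies
in `B`. Anchors move with the shift, so `A` is shift invariant, and apart from `B` everything in
its definition is `Δ⁰₆`, so `A ∈ Γ` for reasonable `Γ`.

A winning strategy in the game on `π⁻¹ A` is turned into one for `B` by simulation: the `B`-run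
is copied to and from the data positions `6k + 4 + k % 2`, which have the parity of `k`, and the
opponent is made to play `b` on `6ℕ + 3` (if the strategy is I's), or `a` on `6ℕ` and `b` on
`6ℕ + 2` (if it is II's). Either way the translate property leaves `1` as the only possible
anchor, so the simulated run lies in `π⁻¹ A` iff the `B`-run lies in `B`.
-/

section BorelHierarchy

variable {X : Type} [TopologicalSpace X]

lemma IsClopen.mem_sigmaLevel {s : Set X} (hs : IsClopen s) (n : ℕ) : s ∈ sigmaLevel X n := by
  induction n generalizing s with
  | zero => exact hs.isOpen
  | succ n ih => exact ⟨fun _ => s, fun _ => ih hs.compl, (iUnion_const s).symm⟩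

lemma iUnion_mem_sigmaLevel_succ {ι : Type*} [Countable ι] {n : ℕ} {f : ι → Set X}
    (hf : ∀ i, (f i)ᶜ ∈ sigmaLevel X n) : ⋃ i, f i ∈ sigmaLevel X (n + 1) := by
  rcases isEmpty_or_nonempty ι with hι | hι
  · rw [iUnion_of_empty]
    exact isClopen_empty.mem_sigmaLevel _
  · obtain ⟨e, he⟩ := exists_surjective_nat ι
    exact ⟨f ∘ e, fun k => hf (e k), (he.iUnion_comp f).symm⟩

lemma compl_mem_sigmaLevel_succ {n : ℕ} {s : Set X} (hs : sᶜ ∈ sigmaLevel X n) :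
    s ∈ sigmaLevel X (n + 1) :=
  ⟨fun _ => s, fun _ => hs, (iUnion_const s).symm⟩

lemma iUnion_mem_sigmaLevel {ι : Type*} [Countable ι] {n : ℕ} {f : ι → Set X}
    (hf : ∀ i, f i ∈ sigmaLevel X n) : ⋃ i, f i ∈ sigmaLevel X n := by
  cases n with
  | zero => exact isOpen_iUnion hf
  | succ n =>
    choose g hg hfg using hf
    have : ⋃ i, f i = ⋃ p : ι × ℕ, g p.1 p.2 := by
      ext; simp [hfg, Prod.exists]
    rw [this]
    exact iUnion_mem_sigmaLevel_succ fun p => hg p.1 p.2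

lemma union_mem_sigmaLevel {n : ℕ} {s t : Set X} (hs : s ∈ sigmaLevel X n)
    (ht : t ∈ sigmaLevel X n) : s ∪ t ∈ sigmaLevel X n := by
  rw [union_eq_iUnion]
  exact iUnion_mem_sigmaLevel fun b => by cases b <;> assumption

lemma inter_mem_sigmaLevel {n : ℕ} {s t : Set X} (hs : s ∈ sigmaLevel X n)
    (ht : t ∈ sigmaLevel X n) : s ∩ t ∈ sigmaLevel X n := by
  induction n generalizing s t with
  | zero => exact hs.inter ht
  | succ n ih =>
    obtain ⟨f, hf, rfl⟩ := hs
    obtain ⟨g, hg, rfl⟩ := ht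
    have : (⋃ i, f i) ∩ ⋃ j, g j = ⋃ p : ℕ × ℕ, f p.1 ∩ g p.2 := by
      ext; simp [Prod.exists]
    rw [this]
    refine iUnion_mem_sigmaLevel_succ fun p => ?_
    rw [compl_inter]
    exact union_mem_sigmaLevel (hf p.1) (hg p.2)

/-- In the indexing of `sigmaLevel` this is `Δ⁰_{n+1}`; thus `IsDelta06` is `IsDeltaLevel 5`. -/
def IsDeltaLevel (n : ℕ) (s : Set X) : Prop := s ∈ sigmaLevel X n ∧ sᶜ ∈ sigmaLevel X n

lemma IsClopen.isDeltaLevel {s : Set X} (hs : IsClopen s) (n : ℕ) : IsDeltaLevel n s :=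
  ⟨hs.mem_sigmaLevel n, hs.compl.mem_sigmaLevel n⟩

namespace IsDeltaLevel

variable {n : ℕ} {s t : Set X}

lemma compl (hs : IsDeltaLevel n s) : IsDeltaLevel n sᶜ := ⟨hs.2, by rw [compl_compl]; exact hs.1⟩

lemma succ (hs : IsDeltaLevel n s) : IsDeltaLevel (n + 1) s :=
  ⟨compl_mem_sigmaLevel_succ hs.2, compl_mem_sigmaLevel_succ (by rw [compl_compl]; exact hs.1)⟩

lemma mono {m : ℕ} (hs : IsDeltaLevel m s) (hmn : m ≤ n) : IsDeltaLevel n s := by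
  induction n, hmn using Nat.le_induction with
  | base => exact hs
  | succ n _ ih => exact ih.succ

lemma union (hs : IsDeltaLevel n s) (ht : IsDeltaLevel n t) : IsDeltaLevel n (s ∪ t) :=
  ⟨union_mem_sigmaLevel hs.1 ht.1, by rw [compl_union]; exact inter_mem_sigmaLevel hs.2 ht.2⟩

lemma inter (hs : IsDeltaLevel n s) (ht : IsDeltaLevel n t) : IsDeltaLevel n (s ∩ t) :=
  ⟨inter_mem_sigmaLevel hs.1 ht.1, by rw [compl_inter]; exact union_mem_sigmaLevel hs.2 ht.2⟩

lemma iUnion {ι : Type*} [Countable ι] {f : ι → Set X} (hf : ∀ i, IsDeltaLevel n (f i)) :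
    IsDeltaLevel (n + 1) (⋃ i, f i) :=
  ⟨iUnion_mem_sigmaLevel_succ fun i => (hf i).2,
    compl_mem_sigmaLevel_succ (by rw [compl_compl]; exact iUnion_mem_sigmaLevel fun i => (hf i).1)⟩

lemma iInter {ι : Type*} [Countable ι] {f : ι → Set X} (hf : ∀ i, IsDeltaLevel n (f i)) :
    IsDeltaLevel (n + 1) (⋂ i, f i) := by
  simpa using (iUnion fun i => (hf i).compl).compl

end IsDeltaLevel

lemma isDeltaLevel_preimage_of_isOpen {S : Type} [TopologicalSpace S] [DiscreteTopology S]
    [Countable S] {n : ℕ} {f : X → ℕ → S} (hf : ∀ k v, IsDeltaLevel n (f ⁻¹' {z | z k = v}))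
    {U : Set (ℕ → S)} (hU : IsOpen U) : IsDeltaLevel (n + 2) (f ⁻¹' U) := by
  have hB := PiNat.isTopologicalBasis_cylinders fun _ : ℕ => S
  obtain ⟨T, hTc, hTB, hTU⟩ :=
    TopologicalSpace.isOpen_sUnion_countable {s | s ∈ _ ∧ s ⊆ U} fun s hs => hB.isOpen hs.1
  have := hTc.to_subtype
  rw [hB.open_eq_sUnion' hU, ← hTU, sUnion_eq_iUnion, preimage_iUnion]
  refine IsDeltaLevel.iUnion fun ⟨s, hs⟩ => ?_
  obtain ⟨x, m, rfl⟩ := (hTB hs).1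
  have hcyl : PiNat.cylinder x m = ⋂ i : Fin m, {z | z i = x i} := by
    ext; simp [PiNat.cylinder, Fin.forall_iff]
  change IsDeltaLevel _ (f ⁻¹' PiNat.cylinder x m)
  rw [hcyl, preimage_iInter]
  exact IsDeltaLevel.iInter fun i => hf i (x i)

end BorelHierarchy

lemma exists_equiv_nat_color_eq {α : Type} [Countable α] {k : ℕ} [NeZero k] (col : α → Fin k)
    (hcol : ∀ c, (col ⁻¹' {c}).Infinite) : ∃ π : ℕ ≃ α, ∀ n, col (π n) = Fin.ofNat k n := by
  have e (c : Fin k) : ℕ ≃ {x // col x = c} :=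
    have : Infinite {x // col x = c} := (hcol c).to_subtype
    nonempty_equiv_of_countable.some
  refine ⟨(Nat.divModEquiv k).trans <| (Equiv.prodComm _ _).trans <|
    (Equiv.sigmaEquivProd _ _).symm.trans <| (Equiv.sigmaCongrRight e).trans <|
    Equiv.sigmaFiberEquiv col, fun n => (e _ _).2⟩

section Enumeration

variable {G : Type} [Group G] [Infinite G]

lemma exists_notMem_and_mul_notMem (F : Finset G) (q : G) : ∃ a, a ∉ F ∧ q * a ∉ F := by
  classical
  obtain ⟨a, ha⟩ := (F ∪ F.image (q⁻¹ * ·)).exists_notMem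
  simp only [Finset.mem_union, Finset.mem_image, not_or, not_exists, not_and] at ha
  exact ⟨a, ha.1, fun h => ha.2 _ h (inv_mul_cancel_left q a)⟩

noncomputable def freshElt (q : G) (F : Finset G) : G := (exists_notMem_and_mul_notMem F q).choose

open Classical in
noncomputable def greedyUsed (q : ℕ → G) : ℕ → Finset G
  | 0 => ∅
  | n + 1 =>
    greedyUsed q n ∪ {freshElt (q n) (greedyUsed q n), q n * freshElt (q n) (greedyUsed q n)}

lemma exists_injective_sumElim_mul (q : ℕ → G) (hq : ∀ n, q n ≠ 1) :
    ∃ a : ℕ → G, Function.Injective (Sum.elim a fun n => q n * a n) := by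
  classical
  set a : ℕ → G := fun n => freshElt (q n) (greedyUsed q n)
  set e := Sum.elim a fun n => q n * a n
  set idx : ℕ ⊕ ℕ → ℕ := Sum.elim id id
  have hmem : ∀ i, e i ∈ greedyUsed q (idx i + 1) := by
    rintro (n | n) <;> simp [e, a, idx, greedyUsed]
  have hfresh : ∀ i, e i ∉ greedyUsed q (idx i) := by
    rintro (n | n)
    exacts [(exists_notMem_and_mul_notMem _ (q n)).choose_spec.1,
      (exists_notMem_and_mul_notMem _ (q n)).choose_spec.2]
  have hmono : Monotone (greedyUsed q) :=
    monotone_nat_of_le_succ fun n => Finset.subset_union_left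
  have hlt : ∀ i j, idx i < idx j → e i ≠ e j := fun i j h he =>
    hfresh j (he ▸ hmono (Nat.succ_le_of_lt h) (hmem i))
  refine ⟨a, fun i j he => ?_⟩
  rcases lt_trichotomy (idx i) (idx j) with h | h | h
  · exact absurd he (hlt i j h)
  · rcases i with n | n <;> rcases j with m | m <;>
      simp only [idx, Sum.elim_inl, Sum.elim_inr, id] at h <;> subst h
    · rfl
    · exact absurd (mul_eq_right.1 he.symm) (hq n)
    · exact absurd (mul_eq_right.1 he) (hq n)
    · rfl
  · exact absurd he.symm (hlt j i h)

lemma exists_coloring [Countable G] (k : ℕ) [NeZero k] : ∃ col : G → Fin k,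
    (∀ c, (col ⁻¹' {c}).Infinite) ∧ ∀ p ≠ 1, ∀ c, ∃ m, col m = 0 ∧ col (p * m) = c := by
  have : Nonempty {g : G // g ≠ 1} := nonempty_subtype.2 (exists_ne 1)
  obtain ⟨p, hp⟩ := exists_surjective_nat {g : G // g ≠ 1}
  -- step `k * j + c` colours a fresh `a` with `0` and `p j * a` with `c`
  set q : ℕ → G := fun n => p (n / k)
  obtain ⟨a, ha⟩ := exists_injective_sumElim_mul q fun n => (p _).2
  set col := Function.extend (Sum.elim a fun n => q n * a n)
    (Sum.elim (fun _ => 0) fun n => Fin.ofNat k n) fun _ => 0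
  have hcol₀ (n : ℕ) : col (a n) = 0 := ha.extend_apply _ _ (Sum.inl n)
  have hcol (n : ℕ) : col (q n * a n) = Fin.ofNat k n := ha.extend_apply _ _ (Sum.inr n)
  have hres (j : ℕ) (c : Fin k) : Fin.ofNat k (k * j + c) = c := by
    ext; simp [Nat.mod_eq_of_lt c.2]
  refine ⟨col, fun c => ?_, fun g hg c => ?_⟩
  · have hinj : Function.Injective fun j => q (k * j + c) * a (k * j + c) :=
      (ha.comp Sum.inr_injective).comp fun j j' h => by
        simpa [NeZero.ne k] using h
    refine (infinite_range_of_injective hinj).mono ?_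
    rintro _ ⟨j, rfl⟩
    rw [mem_preimage, mem_singleton_iff, hcol, hres]
  · obtain ⟨j, hj⟩ := hp ⟨g, hg⟩
    have hq : q (k * j + c) = g := by
      simp [q, Nat.mul_add_div (Nat.pos_of_neZero k), Nat.div_eq_of_lt c.2, hj]
    exact ⟨a (k * j + c), hcol₀ _, by rw [← hq, hcol, hres]⟩

theorem exists_equiv_nat_mul_mem_residue [Countable G] (k : ℕ) [NeZero k] :
    ∃ π : ℕ ≃ G, ∀ p ≠ 1, ∀ c < k, ∃ i j, p * π (k * i) = π (k * j + c) := by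
  obtain ⟨col, hcol, hpair⟩ := exists_coloring (G := G) k
  obtain ⟨π, hπ⟩ := exists_equiv_nat_color_eq col hcol
  have hmod (g : G) : (col g : ℕ) = π.symm g % k := by simpa using congrArg Fin.val (hπ (π.symm g))
  refine ⟨π, fun p hp c hc => ?_⟩
  obtain ⟨m, hm, hpm⟩ := hpair p hp ⟨c, hc⟩
  refine ⟨π.symm m / k, π.symm (p * m) / k, ?_⟩
  have h₀ : π.symm m % k = 0 := by simp [← hmod, hm]
  have h₁ : π.symm (p * m) % k = c := by simp [← hmod, hpm]
  rw [Nat.mul_div_cancel' (Nat.dvd_of_mod_eq_zero h₀), ← h₁, Nat.div_add_mod]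
  simp

end Enumeration

section Coding

variable {G S : Type} [Group G] {pat : Set (G × S)} {d : ℕ → G} {y y' : G → S} {p : G}

def IsAnchor (pat : Set (G × S)) (y : G → S) (p : G) : Prop := ∀ q ∈ pat, y (p * q.1) = q.2

open Classical in
noncomputable def anchor (pat : Set (G × S)) (y : G → S) : G :=
  if h : ∃! p, IsAnchor pat y p then h.exists.choose else 1

noncomputable def decode (pat : Set (G × S)) (d : ℕ → G) (y : G → S) : ℕ → S :=
  fun k => y (anchor pat y * d k)

def codeSet (pat : Set (G × S)) (d : ℕ → G) (B : Set (ℕ → S)) : Set (G → S) :=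
  {y | ∃! p, IsAnchor pat y p} ∩ decode pat d ⁻¹' B

lemma anchor_spec (h : ∃! p, IsAnchor pat y p) (q : G) : IsAnchor pat y q ↔ q = anchor pat y := by
  rw [anchor, dif_pos h]
  exact ⟨fun hq => h.unique hq h.exists.choose_spec, fun e => e ▸ h.exists.choose_spec⟩

lemma anchor_eq (h : ∀ q, IsAnchor pat y q ↔ q = p) : anchor pat y = p :=
  ((h _).1 ((anchor_spec ⟨p, (h p).2 rfl, fun q => (h q).1⟩ _).2 rfl))

lemma mem_codeSet_iff_of_anchor_one {B : Set (ℕ → S)} (h : ∀ q, IsAnchor pat y q ↔ q = 1) :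
    y ∈ codeSet pat d B ↔ (fun k => y (d k)) ∈ B := by
  have hex : ∃! p, IsAnchor pat y p := ⟨1, (h 1).2 rfl, fun q => (h q).1⟩
  simp only [codeSet, mem_inter_iff, mem_ofPred_eq, hex, true_and, mem_preimage]
  unfold decode
  simp only [anchor_eq h, one_mul]

lemma isAnchor_shift {g : G} (hy : ∀ h, y' h = y (g⁻¹ * h)) (p : G) :
    IsAnchor pat y' p ↔ IsAnchor pat y (g⁻¹ * p) := by
  simp [IsAnchor, hy, mul_assoc]

lemma codeSet_shift_invariant (B : Set (ℕ → S)) (hyy' : ShiftRel G y y') :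
    y ∈ codeSet pat d B ↔ y' ∈ codeSet pat d B := by
  obtain ⟨g, hy⟩ := hyy'
  have hiff : (∃! p, IsAnchor pat y' p) ↔ ∃! p, IsAnchor pat y p :=
    (Equiv.mulLeft g⁻¹).existsUnique_congr (isAnchor_shift hy)
  by_cases h : ∃! p, IsAnchor pat y p
  · have h' : anchor pat y' = g * anchor pat y := anchor_eq fun q => by
      rw [isAnchor_shift hy, anchor_spec h, inv_mul_eq_iff_eq_mul]
    have hdec : decode pat d y' = decode pat d y := funext fun k => by
      simp [decode, h', hy, mul_assoc]
    simp [codeSet, h, hiff.2 h, hdec]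
  · simp [codeSet, h, hiff]

lemma setOf_existsUnique_isAnchor :
    {y | ∃! p, IsAnchor pat y p} = ⋃ p, {y | ∀ q, IsAnchor pat y q ↔ q = p} := by
  ext y
  simp only [mem_ofPred_eq, mem_iUnion]
  exact ⟨fun h => ⟨_, anchor_spec h⟩, fun ⟨p, hp⟩ => ⟨p, (hp p).2 rfl, fun q => (hp q).1⟩⟩

variable [TopologicalSpace S] [DiscreteTopology S]

lemma isClopen_setOf_apply_eq {ι : Type} (i : ι) (v : S) : IsClopen {y : ι → S | y i = v} :=
  (isClopen_discrete {v}).preimage (continuous_apply i)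

variable [Countable G] [Countable S]

lemma isDeltaLevel_setOf_isAnchor (p : G) : IsDeltaLevel 1 {y | IsAnchor pat y p} := by
  have : {y | IsAnchor pat y p} = ⋂ q : pat, {y | y (p * q.1.1) = q.1.2} := by
    ext; simp [IsAnchor]
  rw [this]
  exact IsDeltaLevel.iInter fun q => (isClopen_setOf_apply_eq _ _).isDeltaLevel 0

lemma isDeltaLevel_setOf_forall_isAnchor_iff (p : G) :
    IsDeltaLevel 2 {y | ∀ q, IsAnchor pat y q ↔ q = p} := by
  rw [ofPred_forall]
  refine IsDeltaLevel.iInter fun q => ?_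
  by_cases hq : q = p
  · simpa [hq] using isDeltaLevel_setOf_isAnchor p
  · simpa [hq, compl_ofPred] using (isDeltaLevel_setOf_isAnchor q).compl

lemma isDeltaLevel_setOf_existsUnique_isAnchor : IsDeltaLevel 3 {y | ∃! p, IsAnchor pat y p} := by
  rw [setOf_existsUnique_isAnchor]
  exact IsDeltaLevel.iUnion isDeltaLevel_setOf_forall_isAnchor_iff

lemma isDeltaLevel_decode_preimage (k : ℕ) (v : S) :
    IsDeltaLevel 3 (decode pat d ⁻¹' {z | z k = v}) := by
  have : decode pat d ⁻¹' {z | z k = v} =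
      (⋃ p, {y | ∀ q, IsAnchor pat y q ↔ q = p} ∩ {y | y (p * d k) = v}) ∪
        ({y | ∃! p, IsAnchor pat y p}ᶜ ∩ {y | y (d k) = v}) := by
    ext y
    by_cases h : ∃! p, IsAnchor pat y p
    · have hspec := anchor_spec h
      simp only [decode, mem_preimage, mem_ofPred_eq, mem_union, mem_iUnion, mem_inter_iff,
        mem_compl_iff, h, not_true_eq_false, false_and, or_false]
      refine ⟨fun hv => ⟨_, hspec, hv⟩, fun ⟨p, hp, hv⟩ => ?_⟩
      rwa [← (hspec p).1 ((hp p).2 rfl)]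
    · simpa [decode, anchor, h] using
        fun p hp _ => absurd ⟨p, (hp p).2 rfl, fun q => (hp q).1⟩ h
  rw [this]
  exact (IsDeltaLevel.iUnion fun p => (isDeltaLevel_setOf_forall_isAnchor_iff p).inter
    ((isClopen_setOf_apply_eq _ _).isDeltaLevel 2)).union
    (isDeltaLevel_setOf_existsUnique_isAnchor.compl.inter
      ((isClopen_setOf_apply_eq _ _).isDeltaLevel 3))

lemma codeSet_mem {Γ : Pointclass} (hΓ : Reasonable Γ) {B : Set (ℕ → S)}
    (hB : B ∈ Γ.mem (ℕ → S)) : codeSet pat d B ∈ Γ.mem (G → S) := by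
  rw [codeSet, inter_comm]
  exact hΓ.inter_delta _ _ _ (hΓ.delta_subst _ _ _
    (fun U hU => isDeltaLevel_preimage_of_isOpen isDeltaLevel_decode_preimage hU) B hB)
    (isDeltaLevel_setOf_existsUnique_isAnchor.mono (by norm_num))

end Coding

section Games

variable {S : Type}

lemma initSeg_length (x : ℕ → S) (n : ℕ) : (initSeg x n).length = n := by
  simp [initSeg]

lemma initSeg_getD {x : ℕ → S} {n i : ℕ} (h : i < n) (d : S) : (initSeg x n).getD i d = x i := by
  simp [initSeg, h]

lemma initSeg_succ (x : ℕ → S) (n : ℕ) : initSeg x (n + 1) = initSeg x n ++ [x n] := by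
  simp only [initSeg, List.ofFn_succ', List.concat_eq_append, Fin.val_castSucc, Fin.val_last]

def playList (σ : List S → S) (c : ℕ) (w : ℕ → S) : ℕ → List S
  | 0 => []
  | n + 1 => playList σ c w n ++ [if n % 2 = c then σ (playList σ c w n) else w n]

def play (σ : List S → S) (c : ℕ) (w : ℕ → S) (n : ℕ) : S :=
  if n % 2 = c then σ (playList σ c w n) else w n

variable {σ : List S → S} {c : ℕ} {w w' : ℕ → S}

lemma initSeg_play (n : ℕ) : initSeg (play σ c w) n = playList σ c w n := by
  induction n with
  | zero => rfl
  | succ n ih => rw [initSeg_succ, ih]; rfl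

lemma play_of_mod_two_ne {n : ℕ} (h : n % 2 ≠ c) : play σ c w n = w n := if_neg h

lemma followsStratI_play : FollowsStratI σ (play σ 0 w) := fun n => by
  rw [play, if_pos (by omega), initSeg_play]

lemma followsStratII_play : FollowsStratII σ (play σ 1 w) := fun n => by
  rw [play, if_pos (by omega), initSeg_play]

lemma playList_congr {n : ℕ} (h : ∀ t < n, w t = w' t) : playList σ c w n = playList σ c w' n := by
  induction n with
  | zero => rfl
  | succ n ih =>
    rw [playList, playList, ih fun t ht => h t (by omega), h n (by omega)]

lemma FollowsStratI.forall_mod_two {r : ℕ → S} (h : FollowsStratI σ r) :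
    ∀ k, k % 2 = 0 → r k = σ (initSeg r k) := fun k hk => by
  obtain ⟨n, rfl⟩ : ∃ n, k = 2 * n := ⟨k / 2, by omega⟩
  exact h n

lemma FollowsStratII.forall_mod_two {r : ℕ → S} (h : FollowsStratII σ r) :
    ∀ k, k % 2 = 1 → r k = σ (initSeg r k) := fun k hk => by
  obtain ⟨n, rfl⟩ : ∃ n, k = 2 * n + 1 := ⟨k / 2, by omega⟩
  exact h n

def dataPos (k : ℕ) : ℕ := 6 * k + 4 + k % 2

def encodeRun (a b : S) (r : ℕ → S) (t : ℕ) : S :=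
  if t % 6 = 0 then a else if t = dataPos (t / 6) then r (t / 6) else b

variable {a b : S} {r r' : ℕ → S}

lemma encodeRun_six_mul (i : ℕ) : encodeRun a b r (6 * i) = a := if_pos (by omega)

lemma encodeRun_six_mul_add {j : ℕ} (i : ℕ) (hj : 0 < j) (hj' : j < 4) :
    encodeRun a b r (6 * i + j) = b := by
  have h₀ : (6 * i + j) % 6 ≠ 0 := by omega
  have h₁ : 6 * i + j ≠ dataPos ((6 * i + j) / 6) := by
    rw [show (6 * i + j) / 6 = i by omega, dataPos]; omega
  rw [encodeRun, if_neg h₀, if_neg h₁]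

lemma encodeRun_dataPos (k : ℕ) : encodeRun a b r (dataPos k) = r k := by
  have h : dataPos k / 6 = k := by unfold dataPos; omega
  rw [encodeRun, if_neg (by unfold dataPos; omega), h, if_pos rfl]

lemma encodeRun_congr {k t : ℕ} (h : ∀ i < k, r i = r' i) (ht : t < dataPos k) :
    encodeRun a b r t = encodeRun a b r' t := by
  unfold encodeRun
  split_ifs with h₀ h₁
  · rfl
  · exact h _ (by unfold dataPos at ht h₁; omega)
  · rfl

/-- Answer with `σ`'s move at the next data position of the big game, played against the moves
that encode the current position `l`. -/
def simStrategy (a b : S) (σ : List S → S) (c : ℕ) (l : List S) : S :=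
  play σ c (encodeRun a b fun i => l.getD i b) (dataPos l.length)

lemma play_encodeRun_dataPos (hr : ∀ k, k % 2 = c → r k = simStrategy a b σ c (initSeg r k))
    (k : ℕ) : play σ c (encodeRun a b r) (dataPos k) = r k := by
  have hpar : dataPos k % 2 = k % 2 := by unfold dataPos; omega
  by_cases hk : k % 2 = c
  · rw [hr k hk, simStrategy, initSeg_length, play, play, if_pos (hpar.trans hk),
      if_pos (hpar.trans hk)]
    exact congrArg σ <| playList_congr fun t ht =>
      encodeRun_congr (fun i hi => (initSeg_getD hi b).symm) ht
  · rw [play_of_mod_two_ne (hpar ▸ hk), encodeRun_dataPos]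

end Games

section Transfer

variable {G S : Type} [Group G] (π : ℕ ≃ G) {a b : S}

def markerPattern (π : ℕ ≃ G) (a b : S) : Set (G × S) :=
  range (fun i => (π (6 * i), a)) ∪ range (fun i => (π (6 * i + 2), b))

lemma isAnchor_markerPattern_iff {y : G → S} {p : G} : IsAnchor (markerPattern π a b) y p ↔
    (∀ i, y (p * π (6 * i)) = a) ∧ ∀ i, y (p * π (6 * i + 2)) = b := by
  simp [IsAnchor, markerPattern, or_imp, forall_and]

lemma eq_one_of_isAnchor_markerPattern (hab : a ≠ b) {j : ℕ}
    (hπ : ∀ p ≠ 1, ∃ i i', p * π (6 * i) = π (6 * i' + j)) {x : ℕ → S}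
    (hx : ∀ i, x (6 * i + j) = b) {p : G}
    (hp : IsAnchor (markerPattern π a b) (fun g => x (π.symm g)) p) : p = 1 := by
  by_contra hp₁
  obtain ⟨i, i', h⟩ := hπ p hp₁
  have := ((isAnchor_markerPattern_iff π).1 hp).1 i
  rw [h, Equiv.symm_apply_apply, hx] at this
  exact hab this.symm

variable {B : Set (ℕ → S)} {x r : ℕ → S}

lemma mem_codeSet_markerPattern_iff
    (h₁ : ∀ q, IsAnchor (markerPattern π a b) (fun g => x (π.symm g)) q ↔ q = 1)
    (hxr : ∀ k, x (dataPos k) = r k) :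
    (fun g => x (π.symm g)) ∈ codeSet (markerPattern π a b) (fun k => π (dataPos k)) B ↔
      r ∈ B := by
  rw [mem_codeSet_iff_of_anchor_one h₁]
  simp only [Equiv.symm_apply_apply, hxr]

lemma mem_of_followsStratI_simStrategy (hab : a ≠ b)
    (hπ : ∀ p ≠ 1, ∃ i i', p * π (6 * i) = π (6 * i' + 3)) {σ : List S → S}
    (hσ : ∀ x, FollowsStratI σ x →
      (fun g => x (π.symm g)) ∈ codeSet (markerPattern π a b) (fun k => π (dataPos k)) B)
    (hr : FollowsStratI (simStrategy a b σ 0) r) : r ∈ B := by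
  set x := play σ 0 (encodeRun a b r) with hx_def
  have hx := hσ x followsStratI_play
  have hb (i : ℕ) : x (6 * i + 3) = b := by
    rw [hx_def, play_of_mod_two_ne (by omega),
      encodeRun_six_mul_add i (by norm_num) (by norm_num)]
  have h₁ (q : G) := eq_one_of_isAnchor_markerPattern π hab hπ hb (p := q)
  obtain ⟨p, hp, -⟩ := hx.1
  refine (mem_codeSet_markerPattern_iff π (fun q => ⟨h₁ q, ?_⟩)
    (play_encodeRun_dataPos hr.forall_mod_two)).1 hx
  rintro rfl
  rwa [← h₁ p hp]

lemma notMem_of_followsStratII_simStrategy (hab : a ≠ b)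
    (hπ : ∀ p ≠ 1, ∃ i i', p * π (6 * i) = π (6 * i' + 2)) {τ : List S → S}
    (hτ : ∀ x, FollowsStratII τ x →
      (fun g => x (π.symm g)) ∉ codeSet (markerPattern π a b) (fun k => π (dataPos k)) B)
    (hr : FollowsStratII (simStrategy a b τ 1) r) : r ∉ B := by
  set x := play τ 1 (encodeRun a b r) with hx_def
  have ha (i : ℕ) : x (6 * i) = a := by
    rw [hx_def, play_of_mod_two_ne (by omega), encodeRun_six_mul]
  have hb (i : ℕ) : x (6 * i + 2) = b := by
    rw [hx_def, play_of_mod_two_ne (by omega),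
      encodeRun_six_mul_add i (by norm_num) (by norm_num)]
  have h₁ (q : G) : IsAnchor (markerPattern π a b) (fun g => x (π.symm g)) q ↔ q = 1 := by
    refine ⟨eq_one_of_isAnchor_markerPattern π hab hπ hb, ?_⟩
    rintro rfl
    simp [isAnchor_markerPattern_iff, ha, hb]
  rw [← mem_codeSet_markerPattern_iff π h₁ (play_encodeRun_dataPos hr.forall_mod_two)]
  exact hτ x followsStratII_play

end Transfer

theorem gammaDetOn_of_gammaShiftDet {G : Type} [Group G] [Countable G] [Infinite G] {S : Type}
    [TopologicalSpace S] [DiscreteTopology S] [Countable S] {a b : S} (hab : a ≠ b)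
    {Γ : Pointclass} (hΓ : Reasonable Γ) (hdet : GammaShiftDet Γ G S) : GammaDetOn Γ S := by
  intro B hB
  obtain ⟨π, hπ⟩ := exists_equiv_nat_mul_mem_residue (G := G) 6
  rcases hdet _ (codeSet_mem (pat := markerPattern π a b) (d := fun k => π (dataPos k)) hΓ hB)
    (fun _ _ => codeSet_shift_invariant B) π with ⟨σ, hσ⟩ | ⟨τ, hτ⟩
  · exact Or.inl ⟨simStrategy a b σ 0, fun r =>
      mem_of_followsStratI_simStrategy π hab (fun p hp => hπ p hp 3 (by norm_num)) hσ⟩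
  · exact Or.inr ⟨simStrategy a b τ 1, fun r =>
      notMem_of_followsStratII_simStrategy π hab (fun p hp => hπ p hp 2 (by norm_num)) hτ⟩

theorem stmt2 (G : Type) [Group G] [Countable G]
    (hwa : ∃ H : Subgroup G, Infinite H ∧ WeaklyAmenable H)
    (Γ : Pointclass) (hΓ : Reasonable Γ) :
    (GammaShiftDet Γ G Bool → GammaDetOn Γ Bool) ∧
    (GammaShiftDet Γ G ℕ → GammaDetOn Γ ℕ) := by
  obtain ⟨H, hH, -⟩ := hwa
  have : Infinite G := Infinite.of_injective _ H.subtype_injective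
  exact ⟨gammaDetOn_of_gammaShiftDet Bool.false_ne_true hΓ,
    gammaDetOn_of_gammaShiftDet one_ne_zero hΓ⟩
end

section
/- Every finitely generated group is weakly amenable. In particular, for an infinite group G generated by a finite set S = {g₁,…,g_n}, the equivalence relation h₁ ∼ h₂ iff |h₁| = |h₂| — where |h| is the word-length of h with respect to the symbols g_i, g_i⁻¹ — witnesses weak amenability of G. -/
open Filter Set

/-- Word length of `h` with respect to the symbols `s` and `s⁻¹` for `s ∈ S`. -/
noncomputable def wordLength {G : Type*} [Group G] (S : Set G) (h : G) : ℕ :=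
  sInf {n | ∃ l : List G, l.length = n ∧ (∀ x ∈ l, x ∈ S ∨ x⁻¹ ∈ S) ∧ l.prod = h}

/-!
Word length with respect to a finite generating set is subadditive and symmetric, so left
translation by `g` changes lengths by at most `|g|`. Balls are finite and `G` is infinite, hence
every length is attained and the classes of `h ∼ h' ↔ |h| = |h'|` are indexed by `ℕ`.
Translation by `g` sends the class of length `m` into the `2|g| + 1` classes of lengths in
`[m - |g|, m + |g|]`, and if `A n` consists of the classes of length at most `n`, all but at most
`|g|` of its `n + 1` classes are sent into `A n`.
-/

section WordLength

variable {G : Type*} [Group G] {S : Set G}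

lemma wordLength_prod_le_length {l : List G} (hl : ∀ x ∈ l, x ∈ S ∨ x⁻¹ ∈ S) :
    wordLength S l.prod ≤ l.length :=
  Nat.sInf_le ⟨l, rfl, hl, rfl⟩

lemma exists_list_length_eq_wordLength (hS : Subgroup.closure S = ⊤) (h : G) :
    ∃ l : List G, l.length = wordLength S h ∧ (∀ x ∈ l, x ∈ S ∨ x⁻¹ ∈ S) ∧ l.prod = h := by
  have hmem : h ∈ Submonoid.closure (S ∪ S⁻¹) := by
    rw [← Subgroup.closure_toSubmonoid, hS]
    trivial
  obtain ⟨l, hlS, rfl⟩ := Submonoid.exists_list_of_mem_closure hmem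
  exact Nat.sInf_mem (s := {n | ∃ l' : List G, l'.length = n ∧ (∀ x ∈ l', x ∈ S ∨ x⁻¹ ∈ S) ∧
    l'.prod = l.prod}) ⟨l.length, l, rfl, fun x hx => by simpa using hlS x hx, rfl⟩

lemma wordLength_mul_le (hS : Subgroup.closure S = ⊤) (g h : G) :
    wordLength S (g * h) ≤ wordLength S g + wordLength S h := by
  obtain ⟨lg, hlg, hgS, rfl⟩ := exists_list_length_eq_wordLength hS g
  obtain ⟨lh, hlh, hhS, rfl⟩ := exists_list_length_eq_wordLength hS h
  have hS' : ∀ x ∈ lg ++ lh, x ∈ S ∨ x⁻¹ ∈ S := by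
    simpa only [List.mem_append, or_imp, forall_and] using And.intro hgS hhS
  simpa [hlg, hlh] using wordLength_prod_le_length hS'

lemma wordLength_inv_le (hS : Subgroup.closure S = ⊤) (g : G) :
    wordLength S g⁻¹ ≤ wordLength S g := by
  obtain ⟨l, hl, hlS, rfl⟩ := exists_list_length_eq_wordLength hS g
  have hS' : ∀ x ∈ (l.map (·⁻¹)).reverse, x ∈ S ∨ x⁻¹ ∈ S := by
    intro x hx
    simp only [List.mem_reverse, List.mem_map] at hx
    obtain ⟨y, hy, rfl⟩ := hx
    simpa [or_comm] using hlS y hy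
  simpa [List.prod_inv_reverse, hl] using wordLength_prod_le_length hS'

lemma wordLength_le_wordLength_mul_add (hS : Subgroup.closure S = ⊤) (g h : G) :
    wordLength S h ≤ wordLength S (g * h) + wordLength S g := by
  calc wordLength S h = wordLength S (g⁻¹ * (g * h)) := by rw [inv_mul_cancel_left]
    _ ≤ wordLength S g⁻¹ + wordLength S (g * h) := wordLength_mul_le hS _ _
    _ ≤ wordLength S (g * h) + wordLength S g := by
      rw [add_comm]; gcongr; exact wordLength_inv_le hS g

lemma finite_setOf_wordLength_le (hS : Subgroup.closure S = ⊤) (hSfin : S.Finite) (n : ℕ) :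
    {h : G | wordLength S h ≤ n}.Finite := by
  have : Finite ↥(S ∪ S⁻¹) := (hSfin.union hSfin.inv).to_subtype
  refine ((List.finite_length_le ↥(S ∪ S⁻¹) n).image fun l => (l.map Subtype.val).prod).subset ?_
  intro h hh
  obtain ⟨l, hl, hlS, rfl⟩ := exists_list_length_eq_wordLength hS h
  refine ⟨l.pmap Subtype.mk fun x hx => by simpa using hlS x hx, ?_, ?_⟩
  · simpa [hl] using hh
  · simp [List.map_pmap]

/-- A geodesic word for `h` shows that its prefixes realise every length below `|h|`. -/
lemma exists_wordLength_eq_of_le (hS : Subgroup.closure S = ⊤) {h : G} {k : ℕ}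
    (hk : k ≤ wordLength S h) : ∃ h' : G, wordLength S h' = k := by
  obtain ⟨l, hl, hlS, rfl⟩ := exists_list_length_eq_wordLength hS h
  have hprefix := wordLength_prod_le_length (l := l.take k) fun x hx =>
    hlS x (List.mem_of_mem_take hx)
  have hsuffix := wordLength_prod_le_length (l := l.drop k) fun x hx =>
    hlS x (List.mem_of_mem_drop hx)
  have hsplit := wordLength_mul_le hS (l.take k).prod (l.drop k).prod
  rw [← List.prod_append, List.take_append_drop] at hsplit
  simp only [List.length_take, List.length_drop] at hprefix hsuffix
  exact ⟨(l.take k).prod, by omega⟩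

lemma wordLength_surjective [Infinite G] (hS : Subgroup.closure S = ⊤) (hSfin : S.Finite) :
    Function.Surjective (wordLength S) := by
  intro n
  obtain ⟨h, hh⟩ : ∃ h : G, n ≤ wordLength S h := by
    by_contra! hlt
    exact Set.infinite_univ ((finite_setOf_wordLength_le hS hSfin n).subset
      fun h _ => (hlt h).le)
  exact exists_wordLength_eq_of_le hS hh

end WordLength

open Filter Topology

lemma tendsto_div_add_one_of_le_of_le_add {u : ℕ → ℕ} (k : ℕ)
    (hle : ∀ n, u n ≤ n + 1) (hge : ∀ n, n + 1 ≤ u n + k) :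
    Tendsto (fun n => (u n : ℝ) / ((n : ℝ) + 1)) atTop (𝓝 1) := by
  have hlower : Tendsto (fun n : ℕ => 1 - k * (1 / ((n : ℝ) + 1))) atTop (𝓝 1) := by
    simpa using (tendsto_one_div_add_atTop_nhds_zero_nat.const_mul (k : ℝ)).const_sub 1
  refine tendsto_of_tendsto_of_tendsto_of_le_of_le hlower tendsto_const_nhds (fun n => ?_)
    (fun n => ?_)
  · have : ((n : ℝ) + 1) ≤ u n + k := by exact_mod_cast hge n
    rw [le_div_iff₀ (by positivity)]
    field_simp
    linarith
  · have : (u n : ℝ) ≤ n + 1 := by exact_mod_cast hle n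
    rwa [div_le_one (by positivity)]

section KerSublevel

variable {α : Type*} {f : α → ℕ} (hf : Function.Surjective f)

noncomputable def kerSublevel (n : ℕ) : Finset (Quotient (Setoid.ker f)) :=
  (Finset.range (n + 1)).map (Setoid.quotientKerEquivOfSurjective f hf).symm.toEmbedding

lemma mem_kerSublevel_mk {n : ℕ} {a : α} : Quotient.mk _ a ∈ kerSublevel hf n ↔ f a ≤ n := by
  rw [kerSublevel, Finset.mem_map_equiv, Equiv.symm_symm, Finset.mem_range, Nat.lt_succ_iff]
  rfl

lemma card_kerSublevel (n : ℕ) : (kerSublevel hf n).card = n + 1 := by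
  simp [kerSublevel]

lemma monotone_kerSublevel : Monotone (kerSublevel hf) := fun _ _ hmn =>
  Finset.map_subset_map.mpr (Finset.range_subset_range.mpr (by omega))

end KerSublevel

section KerOfLipschitz

variable {G : Type*} [Group G] {f : G → ℕ}

lemma classBound_ker {g : G} {k : ℕ} (hk : ∀ h, f (g * h) ≤ f h + k ∧ f h ≤ f (g * h) + k) :
    classBound (Setoid.ker f) g (2 * k + 1) := by
  refine Quotient.ind fun h₀ => ?_
  set T := {C' : Quotient (Setoid.ker f) | ∃ h : G, Quotient.mk _ h = Quotient.mk _ h₀ ∧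
    Quotient.mk _ (g * h) = C'}
  have hT : Setoid.kerLift f '' T ⊆ Finset.Icc (f h₀ - k) (f h₀ + k) := by
    rintro _ ⟨_, ⟨h, hh, rfl⟩, rfl⟩
    have : f h = f h₀ := Quotient.exact hh
    simp only [Setoid.kerLift_mk, Finset.coe_Icc, Set.mem_Icc]
    have := hk h
    omega
  calc T.encard = (Setoid.kerLift f '' T).encard :=
        ((Setoid.kerLift_injective f).injOn).encard_image.symm
    _ ≤ (Finset.Icc (f h₀ - k) (f h₀ + k)).card := by
        rw [← Set.encard_coe_eq_coe_finsetCard]; exact Set.encard_mono hT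
    _ ≤ (2 * k + 1 : ℕ) := by rw [Nat.card_Icc]; norm_cast; omega

lemma appropriateRel_ker (hf : Function.Surjective f)
    (hlip : ∀ g, ∃ k, ∀ h, f (g * h) ≤ f h + k ∧ f h ≤ f (g * h) + k) :
    AppropriateRel (Setoid.ker f) := by
  refine ⟨Infinite.of_injective _ (Setoid.quotientKerEquivOfSurjective f hf).symm.injective,
    fun g => ?_⟩
  obtain ⟨k, hk⟩ := hlip g
  exact ⟨2 * k + 1, classBound_ker hk⟩

/-- Translation by `g` can only push out of `kerSublevel hf n` the classes of the top `k` levels. -/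
lemma ncard_translate_mem_kerSublevel_bounds (hf : Function.Surjective f) {g : G} {k : ℕ}
    (hk : ∀ h, f (g * h) ≤ f h + k) (n : ℕ) :
    let good := {C | C ∈ kerSublevel hf n ∧
      ∀ h : G, Quotient.mk _ h = C → Quotient.mk _ (g * h) ∈ kerSublevel hf n}
    good.ncard ≤ n + 1 ∧ n + 1 ≤ good.ncard + k := by
  intro good
  have hfin : good.Finite := (kerSublevel hf n).finite_toSet.subset fun _ hC => hC.1
  refine ⟨?_, ?_⟩
  · calc good.ncard ≤ (kerSublevel hf n : Set (Quotient (Setoid.ker f))).ncard :=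
          Set.ncard_le_ncard (fun _ hC => hC.1) (kerSublevel hf n).finite_toSet
      _ = n + 1 := by rw [Set.ncard_coe_finset, card_kerSublevel]
  · rcases le_or_gt k n with hkn | hnk
    · have hsub : (kerSublevel hf (n - k) : Set (Quotient (Setoid.ker f))) ⊆ good := by
        refine Quotient.ind fun h₀ hh₀ => ⟨?_, fun h hh => ?_⟩
        · rw [Finset.mem_coe, mem_kerSublevel_mk] at hh₀
          rw [mem_kerSublevel_mk]
          omega
        · rw [← hh, Finset.mem_coe, mem_kerSublevel_mk] at hh₀
          rw [mem_kerSublevel_mk]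
          have := hk h
          omega
      have := Set.ncard_le_ncard hsub hfin
      rw [Set.ncard_coe_finset, card_kerSublevel] at this
      omega
    · omega

lemma waWitness_kerSublevel (hf : Function.Surjective f)
    (hlip : ∀ g, ∃ k, ∀ h, f (g * h) ≤ f h + k) :
    WAWitness (Setoid.ker f) (kerSublevel hf) := by
  refine ⟨monotone_kerSublevel hf,
    Quotient.ind fun a => ⟨f a, (mem_kerSublevel_mk hf).mpr le_rfl⟩, fun g => ?_⟩
  obtain ⟨k, hk⟩ := hlip g
  simp only [card_kerSublevel, Nat.cast_add, Nat.cast_one]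
  exact tendsto_div_add_one_of_le_of_le_add k
    (fun n => (ncard_translate_mem_kerSublevel_bounds hf hk n).1)
    (fun n => (ncard_translate_mem_kerSublevel_bounds hf hk n).2)

end KerOfLipschitz

theorem exists_waWitness_ker_wordLength {G : Type*} [Group G] [Infinite G] (S : Finset G)
    (hS : Subgroup.closure (S : Set G) = ⊤) :
    ∃ A : ℕ → Finset (Quotient (Setoid.ker (wordLength (S : Set G)))),
      AppropriateRel (Setoid.ker (wordLength (S : Set G))) ∧
      WAWitness (Setoid.ker (wordLength (S : Set G))) A := by
  have hf := wordLength_surjective hS S.finite_toSet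
  have hlip (g h : G) : wordLength (S : Set G) (g * h) ≤ wordLength S h + wordLength S g ∧
      wordLength (S : Set G) h ≤ wordLength S (g * h) + wordLength S g :=
    ⟨(wordLength_mul_le hS g h).trans_eq (add_comm _ _), wordLength_le_wordLength_mul_add hS g h⟩
  exact ⟨kerSublevel hf, appropriateRel_ker hf fun g => ⟨_, hlip g⟩,
    waWitness_kerSublevel hf fun g => ⟨_, fun h => (hlip g h).1⟩⟩

theorem stmt8 (G : Type*) [Group G] :
    (Group.FG G → WeaklyAmenable G) ∧
    (∀ S : Finset G, Infinite G → Subgroup.closure (S : Set G) = ⊤ →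
      ∃ A : ℕ → Finset (Quotient (Setoid.ker (wordLength (S : Set G)))),
        AppropriateRel (Setoid.ker (wordLength (S : Set G))) ∧
        WAWitness (Setoid.ker (wordLength (S : Set G))) A) := by
  refine ⟨fun hFG => ?_, fun S _ hS => exists_waWitness_ker_wordLength S hS⟩
  rcases finite_or_infinite G with hfin | _
  · exact Or.inl hfin
  · obtain ⟨S, hS⟩ := hFG.out
    exact Or.inr ⟨_, exists_waWitness_ker_wordLength S hS⟩
end
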